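/- arXiv:1703.01150 — 2 statements merged into one kernel-verified Lean document; each statement's English description precedes it below -/
import Mathlib

section
/- Let n, m > 1 be integers with n dividing m, write m = p₁^{α₁}⋯p_s^{α_s} and n = p₁^{β₁}⋯p_s^{β_s} where p₁, …, p_s are distinct primes, each α_i ≥ 1 and 0 ≤ β_i ≤ α_i, and suppose G_n(Z_m) is not a null graph. Let 𝔄 be the set of isolated vertices of G_n(Z_m). If n = p₁p₂ and m = p₁^{α₁}p₂ with α₁ ≥ 2 (after relabeling the primes), then |𝔄| = α₁; otherwise |𝔄| = ∏_{i=1}^{s}(α_i − β_i + 1) − 1. -/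
/-- The vertex set of `G_n(Z_m)`: nonzero proper ideals of `Z_m`, identified with
divisors `d` of `m` with `d ≠ 1` and `d ≠ m` (the ideal `dZ_m`). -/
abbrev IdealVertex (m : ℕ) := {d : ℕ // d ∣ m ∧ d ≠ 1 ∧ d ≠ m}

/-- The graph `G_n(Z_m)`: vertices are the nonzero proper ideals `dZ_m` of `Z_m`,
and distinct vertices `d₁Z_m`, `d₂Z_m` are adjacent iff `d₁Z_n ∩ d₂Z_n ≠ 0`,
equivalently iff `n` does not divide `lcm(d₁, d₂)`. -/
def idealGraph (n m : ℕ) : SimpleGraph (IdealVertex m) where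
  Adj I J := I ≠ J ∧ ¬ n ∣ Nat.lcm I.1 J.1
  symm := ⟨by
    rintro I J ⟨h1, h2⟩
    exact ⟨h1.symm, by rwa [Nat.lcm_comm]⟩⟩
  loopless := ⟨by rintro I ⟨h1, -⟩; exact h1 rfl⟩

private lemma aux_prod_dvd {ι : Type*} (f : ι → ℕ) {v : ℕ} :
    ∀ t : Finset ι, ((t : Set ι)).Pairwise (Function.onFun Nat.Coprime f) →
      (∀ i ∈ t, f i ∣ v) → (∏ i ∈ t, f i) ∣ v := by
  classical
  intro t
  induction t using Finset.induction_on with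
  | empty => intro _ _; simp
  | @insert a r har ih =>
    intro hcop h
    rw [Finset.prod_insert har]
    have hc : Nat.Coprime (f a) (∏ i ∈ r, f i) :=
      Nat.Coprime.prod_right fun i hi =>
        hcop (Finset.mem_insert_self a r) (Finset.mem_insert_of_mem hi)
          (by rintro rfl; exact har hi)
    exact hc.mul_dvd_of_dvd_of_dvd (h a (Finset.mem_insert_self a r))
      (ih (hcop.mono (by simp [Set.subset_insert])) fun i hi => h i (Finset.mem_insert_of_mem hi))

private lemma prime_pow_dvd_lcm {p k a b : ℕ} (hp : p.Prime) (ha : a ≠ 0) (hb : b ≠ 0) :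
    p ^ k ∣ Nat.lcm a b ↔ p ^ k ∣ a ∨ p ^ k ∣ b := by
  rw [Nat.Prime.pow_dvd_iff_le_factorization hp (Nat.lcm_ne_zero ha hb),
    Nat.Prime.pow_dvd_iff_le_factorization hp ha, Nat.Prime.pow_dvd_iff_le_factorization hp hb,
    Nat.factorization_lcm ha hb, Finsupp.sup_apply, le_sup_iff]

/-- The number of isolated vertices of `G_n(Z_m)` (when it is not a null graph):
`α₁` in the exceptional case `n = p₁p₂`, `m = p₁^{α₁}p₂` with `α₁ ≥ 2`,
and `∏(αᵢ - βᵢ + 1) - 1` otherwise. -/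
theorem idealGraph_card_isolated (n m s : ℕ) (hn : 1 < n) (hm : 1 < m) (hdvd : n ∣ m)
    (p α β : Fin s → ℕ) (hp : ∀ i, (p i).Prime) (hinj : Function.Injective p)
    (hα : ∀ i, 1 ≤ α i) (hβα : ∀ i, β i ≤ α i)
    (hmeq : m = ∏ i, p i ^ α i) (hneq : n = ∏ i, p i ^ β i)
    (hnotnull : ∃ a b : IdealVertex m, (idealGraph n m).Adj a b) :
    (∀ q₁ q₂ a : ℕ, q₁.Prime → q₂.Prime → q₁ ≠ q₂ → 2 ≤ a →
      n = q₁ * q₂ → m = q₁ ^ a * q₂ →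
      {v : IdealVertex m | ∀ u : IdealVertex m, ¬ (idealGraph n m).Adj v u}.ncard = a) ∧
    ((¬ ∃ q₁ q₂ a : ℕ, q₁.Prime ∧ q₂.Prime ∧ q₁ ≠ q₂ ∧ 2 ≤ a ∧
        n = q₁ * q₂ ∧ m = q₁ ^ a * q₂) →
      {v : IdealVertex m | ∀ u : IdealVertex m, ¬ (idealGraph n m).Adj v u}.ncard =
        (∏ i, (α i - β i + 1)) - 1) := by
  have hm0 : m ≠ 0 := by omega
  have hn0 : n ≠ 0 := by omega
  have hv0 : ∀ v : IdealVertex m, v.1 ≠ 0 := fun v h => hm0 (zero_dvd_iff.mp (h ▸ v.2.1))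
  constructor
  · -- exceptional case
    intro q₁ q₂ a hq₁ hq₂ hne ha hneq' hmeq'
    have hchar : {v : IdealVertex m | ∀ u : IdealVertex m, ¬ (idealGraph n m).Adj v u}
        = {v : IdealVertex m | q₂ ∣ v.1} := by
      ext v
      simp only [Set.mem_setOf_eq]
      constructor
      · intro hiso
        by_contra hq₂v
        have hvq : v.1 ∣ q₁ ^ a := by
          have hcop : Nat.Coprime v.1 q₂ := ((hq₂.coprime_iff_not_dvd).mpr hq₂v).symm
          exact hcop.dvd_of_dvd_mul_right (hmeq' ▸ v.2.1)
        obtain ⟨k, hk, hvk⟩ := (Nat.dvd_prime_pow hq₁).mp hvq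
        set t : ℕ := if v.1 = q₁ then 2 else 1 with ht
        have ht0 : t ≠ 0 := by dsimp only [t]; split <;> omega
        have ht_le : t ≤ a := by dsimp only [t]; split <;> omega
        have hq₂t : ∀ l : ℕ, ¬ q₂ ∣ q₁ ^ l := fun l h =>
          hne ((Nat.prime_dvd_prime_iff_eq hq₂ hq₁).mp (hq₂.dvd_of_dvd_pow h)).symm
        have hu_dvd : q₁ ^ t ∣ m := hmeq' ▸ Dvd.dvd.mul_right (pow_dvd_pow q₁ ht_le) q₂
        have hu_ne1 : q₁ ^ t ≠ 1 := fun h => hq₁.ne_one ((pow_eq_one_iff.mp h).resolve_right ht0)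
        have hq₂m : q₂ ∣ m := by rw [hmeq']; exact dvd_mul_left q₂ (q₁ ^ a)
        have hu_nem : q₁ ^ t ≠ m := fun h => hq₂t t (h ▸ hq₂m)
        have hu_nev : q₁ ^ t ≠ v.1 := by
          dsimp only [t]; split
          · rename_i h
            rw [h]
            intro h2
            have := Nat.pow_right_injective hq₁.two_le (h2.trans (pow_one q₁).symm)
            omega
          · rename_i h
            rw [pow_one]
            exact fun h2 => h h2.symm
        refine hiso ⟨q₁ ^ t, hu_dvd, hu_ne1, hu_nem⟩
          ⟨fun h => hu_nev (congrArg Subtype.val h).symm, fun hdvd => ?_⟩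
        have hq₂lcm : q₂ ∣ Nat.lcm v.1 (q₁ ^ t) :=
          dvd_trans (hneq' ▸ dvd_mul_left q₂ q₁) hdvd
        have : q₂ ∣ q₁ ^ (k + t) := by
          rw [pow_add, ← hvk]
          exact hq₂lcm.trans (Nat.lcm_dvd_mul _ _)
        exact hq₂t _ this
      · intro hq₂v u hadj
        obtain ⟨hvu, hndvd⟩ := hadj
        apply hndvd
        rw [hneq']
        have hq₂lcm : q₂ ∣ Nat.lcm v.1 u.1 := hq₂v.trans (Nat.dvd_lcm_left _ _)
        have hq₁lcm : q₁ ∣ Nat.lcm v.1 u.1 := by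
          by_contra hq₁lcm
          have hq₁v : ¬ q₁ ∣ v.1 := fun h => hq₁lcm (h.trans (Nat.dvd_lcm_left _ _))
          have hq₁u : ¬ q₁ ∣ u.1 := fun h => hq₁lcm (h.trans (Nat.dvd_lcm_right _ _))
          have hv2 : v.1 = q₂ := by
            have hcop : Nat.Coprime v.1 (q₁ ^ a) :=
              (((hq₁.coprime_iff_not_dvd).mpr hq₁v).symm).pow_right a
            have hvm : v.1 ∣ q₁ ^ a * q₂ := by rw [← hmeq']; exact v.2.1
            have hvd := hcop.dvd_of_dvd_mul_left hvm
            rcases hq₂.eq_one_or_self_of_dvd _ hvd with h | h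
            · exact absurd h v.2.2.1
            · exact h
          have hu2 : u.1 = q₂ := by
            have hcop : Nat.Coprime u.1 (q₁ ^ a) :=
              (((hq₁.coprime_iff_not_dvd).mpr hq₁u).symm).pow_right a
            have hum : u.1 ∣ q₁ ^ a * q₂ := by rw [← hmeq']; exact u.2.1
            have hud := hcop.dvd_of_dvd_mul_left hum
            rcases hq₂.eq_one_or_self_of_dvd _ hud with h | h
            · exact absurd h u.2.2.1
            · exact h
          exact hvu (Subtype.ext (hv2.trans hu2.symm))
        exact Nat.Coprime.mul_dvd_of_dvd_of_dvd
          ((Nat.coprime_primes hq₁ hq₂).mpr hne) hq₁lcm hq₂lcm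
    have hq₂0 : 0 < q₂ := hq₂.pos
    -- the set of multiples of q₂ is the range of an explicit injection from `Fin a`
    have hF : ∀ k : Fin a, q₁ ^ (k : ℕ) * q₂ ∣ m ∧ q₁ ^ (k : ℕ) * q₂ ≠ 1 ∧
        q₁ ^ (k : ℕ) * q₂ ≠ m := by
      intro k
      refine ⟨hmeq' ▸ mul_dvd_mul (pow_dvd_pow q₁ (le_of_lt k.2)) dvd_rfl, ?_, ?_⟩
      · exact fun h => hq₂.ne_one (Nat.eq_one_of_mul_eq_one_left h)
      · intro h
        rw [hmeq'] at h
        have := Nat.pow_right_injective hq₁.two_le (Nat.eq_of_mul_eq_mul_right hq₂0 h)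
        have := k.2
        omega
    set F : Fin a → IdealVertex m := fun k => ⟨q₁ ^ (k : ℕ) * q₂, hF k⟩ with hFdef
    have hFinj : Function.Injective F := by
      intro k₁ k₂ h
      have h' : q₁ ^ (k₁ : ℕ) * q₂ = q₁ ^ (k₂ : ℕ) * q₂ := congrArg Subtype.val h
      exact Fin.ext (Nat.pow_right_injective hq₁.two_le (Nat.eq_of_mul_eq_mul_right hq₂0 h'))
    have hrange : {v : IdealVertex m | q₂ ∣ v.1} = Set.range F := by
      ext v
      simp only [Set.mem_setOf_eq, Set.mem_range]
      constructor
      · intro hq₂v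
        obtain ⟨e, he⟩ := hq₂v
        have hedvd : e ∣ q₁ ^ a := by
          have h1 : q₂ * e ∣ q₂ * q₁ ^ a := by
            rw [← he, mul_comm q₂ (q₁ ^ a), ← hmeq']
            exact v.2.1
          exact (Nat.mul_dvd_mul_iff_left hq₂0).mp h1
        obtain ⟨k, hk, hek⟩ := (Nat.dvd_prime_pow hq₁).mp hedvd
        have hka : k ≠ a := by
          intro h
          apply v.2.2.2
          rw [he, hek, h, hmeq', mul_comm]
        exact ⟨⟨k, by omega⟩, Subtype.ext (by simp [hFdef, he, hek, mul_comm])⟩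
      · rintro ⟨k, rfl⟩
        exact dvd_mul_left q₂ _
    rw [hchar, hrange, ← Set.image_univ, Set.ncard_image_of_injective _ hFinj,
      Set.ncard_univ, Nat.card_eq_fintype_card, Fintype.card_fin]
  · -- generic case
    intro hnotexc
    have hne_pq : ∀ i j : Fin s, i ≠ j → p i ≠ p j := fun i j hij h => hij (hinj h)
    have hcop : ∀ e : Fin s → ℕ,
        ((Finset.univ : Finset (Fin s)) : Set (Fin s)).Pairwise
          (Function.onFun Nat.Coprime fun i => p i ^ e i) := fun e i _ j _ hij =>
      Nat.Coprime.pow _ _ ((Nat.coprime_primes (hp i) (hp j)).mpr (hne_pq i j hij))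
    have hpdm : ∀ k : Fin s, p k ∣ m := fun k =>
      dvd_trans (dvd_pow_self (p k) (by have := hα k; omega))
        (hmeq ▸ Finset.dvd_prod_of_mem _ (Finset.mem_univ k))
    have hchar : {v : IdealVertex m | ∀ u : IdealVertex m, ¬ (idealGraph n m).Adj v u}
        = {v : IdealVertex m | n ∣ v.1} := by
      ext v
      simp only [Set.mem_setOf_eq]
      constructor
      · intro hiso
        by_contra hnv
        obtain ⟨i, hi⟩ : ∃ i, ¬ p i ^ β i ∣ v.1 := by
          by_contra h
          push_neg at h
          exact hnv (hneq ▸ aux_prod_dvd _ Finset.univ (hcop β) fun i _ => h i)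
        have hβi : β i ≠ 0 := fun h => hi (by simp [h])
        have hpi_dvd_pow : p i ∣ p i ^ β i := dvd_pow_self _ hβi
        have hH : ∀ d : ℕ, d ∣ m → d ≠ 1 → d ≠ m → d ≠ v.1 → ¬ p i ^ β i ∣ d → False := by
          intro d hdm hd1 hdm' hdv hdi
          have hd0 : d ≠ 0 := fun h => hm0 (zero_dvd_iff.mp (h ▸ hdm))
          have hnl : n ∣ Nat.lcm v.1 d := by
            by_contra hnd
            exact hiso ⟨d, hdm, hd1, hdm'⟩ ⟨fun h => hdv (congrArg Subtype.val h).symm, hnd⟩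
          have h2 : p i ^ β i ∣ Nat.lcm v.1 d :=
            dvd_trans (hneq ▸ Finset.dvd_prod_of_mem _ (Finset.mem_univ i)) hnl
          rcases (prime_pow_dvd_lcm (hp i) (hv0 v) hd0).mp h2 with h | h
          · exact hi h
          · exact hdi h
        obtain ⟨A, B, habne, hablcm⟩ := hnotnull
        obtain ⟨j, hj⟩ : ∃ j, ¬ p j ^ β j ∣ Nat.lcm A.1 B.1 := by
          by_contra h
          push_neg at h
          exact hablcm (hneq ▸ aux_prod_dvd _ Finset.univ (hcop β) fun j _ => h j)
        have hja : ¬ p j ^ β j ∣ A.1 := fun h => hj (h.trans (Nat.dvd_lcm_left _ _))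
        have hjb : ¬ p j ^ β j ∣ B.1 := fun h => hj (h.trans (Nat.dvd_lcm_right _ _))
        have hβj : β j ≠ 0 := fun h => hj (by simp [h])
        have hji : j ≠ i := by
          rintro rfl
          rcases em (A.1 = v.1) with h | h
          · rcases em (B.1 = v.1) with h' | h'
            · exact habne (Subtype.ext (h.trans h'.symm))
            · exact hH B.1 B.2.1 B.2.2.1 B.2.2.2 h' hjb
          · exact hH A.1 A.2.1 A.2.2.1 A.2.2.2 h hja
        have hpnem : ∀ k : Fin s, p k ≠ m := by
          intro k h
          obtain ⟨l, hl⟩ : ∃ l : Fin s, l ≠ k := by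
            rcases em (k = i) with rfl | hki
            · exact ⟨j, hji⟩
            · exact ⟨i, fun h' => hki h'.symm⟩
          have hdd : p l ∣ p k := h ▸ hpdm l
          exact hne_pq l k hl ((Nat.prime_dvd_prime_iff_eq (hp l) (hp k)).mp hdd)
        have hkv : ∀ k : Fin s, k ≠ i → p k = v.1 := by
          intro k hki
          by_contra hkvne
          refine hH (p k) (hpdm k) (hp k).ne_one (hpnem k) hkvne fun h => ?_
          exact hne_pq i k (fun h' => hki h'.symm)
            ((Nat.prime_dvd_prime_iff_eq (hp i) (hp k)).mp (hpi_dvd_pow.trans h))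
        have hvj : v.1 = p j := (hkv j hji).symm
        have hk_cases : ∀ k : Fin s, k = i ∨ k = j := by
          intro k
          rcases em (k = i) with h | h
          · exact Or.inl h
          · exact Or.inr (hinj ((hkv k h).trans hvj))
        have hij' : i ≠ j := fun h => hji h.symm
        have huniv : (Finset.univ : Finset (Fin s)) = {i, j} := by
          ext k
          simp only [Finset.mem_univ, Finset.mem_insert, Finset.mem_singleton, true_iff]
          exact hk_cases k
        have hm2 : m = p i ^ α i * p j ^ α j := by rw [hmeq, huniv, Finset.prod_pair hij']
        have hn2 : n = p i ^ β i * p j ^ β j := by rw [hneq, huniv, Finset.prod_pair hij']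
        have hαj : α j = 1 := by
          by_contra hαj
          have h2 : 2 ≤ α j := by have := hα j; omega
          refine hH (p j ^ 2) ((pow_dvd_pow (p j) h2).trans
              (hmeq ▸ Finset.dvd_prod_of_mem _ (Finset.mem_univ j)))
            (fun h => (hp j).ne_one ((pow_eq_one_iff.mp h).resolve_right (by omega))) ?_ ?_ ?_
          · intro h
            have : p i ∣ p j := (hp i).dvd_of_dvd_pow (h ▸ hpdm i)
            exact hij' (hinj ((Nat.prime_dvd_prime_iff_eq (hp i) (hp j)).mp this))
          · rw [hvj]
            intro h
            have := Nat.pow_right_injective (hp j).two_le (h.trans (pow_one (p j)).symm)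
            omega
          · intro h
            have hcontra : p i ∣ p j := (hp i).dvd_of_dvd_pow (hpi_dvd_pow.trans h)
            exact hij' (hinj ((Nat.prime_dvd_prime_iff_eq (hp i) (hp j)).mp hcontra))
        have hβj1 : β j = 1 := by have := hβα j; omega
        have hβi1 : β i = 1 := by
          by_contra hβi1
          have h2 : 2 ≤ β i := by omega
          refine hH (p i) (hpdm i) (hp i).ne_one (hpnem i) ?_ ?_
          · rw [hvj]
            exact fun h => hij' (hinj h)
          · intro h
            have h1 : p i ^ β i ∣ p i ^ 1 := by rw [pow_one]; exact h
            have := (Nat.pow_dvd_pow_iff_le_right (hp i).one_lt).mp h1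
            omega
        have hαi2 : 2 ≤ α i := by
          by_contra hαi2
          have hαi1 : α i = 1 := by have := hα i; omega
          have hmpq : m = p i * p j := by rw [hm2, hαi1, hαj, pow_one, pow_one]
          rw [hβj1, pow_one] at hja hjb
          have hA : A.1 = p i := by
            have hcop2 : Nat.Coprime A.1 (p j) := ((hp j).coprime_iff_not_dvd.mpr hja).symm
            have hAd : A.1 ∣ p i := hcop2.dvd_of_dvd_mul_right (hmpq ▸ A.2.1)
            rcases (hp i).eq_one_or_self_of_dvd _ hAd with h | h
            · exact absurd h A.2.2.1
            · exact h
          have hB : B.1 = p i := by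
            have hcop2 : Nat.Coprime B.1 (p j) := ((hp j).coprime_iff_not_dvd.mpr hjb).symm
            have hBd : B.1 ∣ p i := hcop2.dvd_of_dvd_mul_right (hmpq ▸ B.2.1)
            rcases (hp i).eq_one_or_self_of_dvd _ hBd with h | h
            · exact absurd h B.2.2.1
            · exact h
          exact habne (Subtype.ext (hA.trans hB.symm))
        exact hnotexc ⟨p i, p j, α i, hp i, hp j, hne_pq i j hij', hαi2,
          by rw [hn2, hβi1, hβj1, pow_one, pow_one],
          by rw [hm2, hαj, pow_one]⟩
      · intro hnv u hadj
        exact hadj.2 (hnv.trans (Nat.dvd_lcm_left _ _))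
    -- counting
    rw [hchar]
    set T : ℕ := ∏ i, p i ^ (α i - β i) with hT
    have hmT : m = n * T := by
      rw [hmeq, hneq, hT, ← Finset.prod_mul_distrib]
      refine Finset.prod_congr rfl fun i _ => ?_
      rw [← pow_add]
      congr 1
      have := hβα i
      omega
    have hT0 : T ≠ 0 := fun h => hm0 (by rw [hmT, h, mul_zero])
    have hnpos : 0 < n := by omega
    have himg : Subtype.val '' {v : IdealVertex m | n ∣ v.1}
        = ↑((T.divisors.erase T).image (fun e => n * e)) := by
      ext d
      simp only [Set.mem_image, Finset.coe_image, Set.mem_setOf_eq, Finset.mem_coe,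
        Finset.mem_erase, Nat.mem_divisors]
      constructor
      · rintro ⟨v, hv, rfl⟩
        obtain ⟨e, he⟩ := hv
        refine ⟨e, ⟨?_, ?_, hT0⟩, he.symm⟩
        · intro h
          apply v.2.2.2
          rw [he, h, ← hmT]
        · have h1 : n * e ∣ n * T := by rw [← he, ← hmT]; exact v.2.1
          exact (Nat.mul_dvd_mul_iff_left hnpos).mp h1
      · rintro ⟨e, ⟨heT, heD, -⟩, rfl⟩
        refine ⟨⟨n * e, ?_, ?_, ?_⟩, Dvd.intro e rfl, rfl⟩
        · rw [hmT]
          exact Nat.mul_dvd_mul_left n heD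
        · intro h
          have := Nat.eq_one_of_mul_eq_one_right h
          omega
        · intro h
          rw [hmT] at h
          exact heT (Nat.eq_of_mul_eq_mul_left hnpos h)
    have hcard1 : {v : IdealVertex m | n ∣ v.1}.ncard
        = ((T.divisors.erase T).image (fun e => n * e)).card := by
      rw [← Set.ncard_coe_finset, ← himg,
        Set.ncard_image_of_injective _ Subtype.coe_injective]
    have hdiv : T.divisors.card = ∏ i, (α i - β i + 1) := by
      have h1 : (ArithmeticFunction.sigma 0) T
          = ∏ i, (ArithmeticFunction.sigma 0) (p i ^ (α i - β i)) :=
        ArithmeticFunction.IsMultiplicative.map_prod _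
          ArithmeticFunction.isMultiplicative_sigma Finset.univ (hcop _)
      rw [ArithmeticFunction.sigma_zero_apply] at h1
      rw [h1]
      exact Finset.prod_congr rfl fun i _ =>
        ArithmeticFunction.sigma_zero_apply_prime_pow (hp i)
    rw [hcard1, Finset.card_image_of_injective _
        (fun x y h => Nat.eq_of_mul_eq_mul_left hnpos h),
      Finset.card_erase_of_mem (Nat.mem_divisors_self T hT0), hdiv]
end

section
/- Let n, m > 1 be integers with n dividing m, and suppose G_n(Z_m) is not a null graph. Let 𝔄 be the set of isolated vertices of G_n(Z_m). If it is not the case that n = p₁p₂ and m = p₁^{α₁}p₂^{α₂} for distinct primes p₁, p₂ and integers α₁, α₂ ≥ 2, then the induced subgraph of G_n(Z_m) on the vertices outside 𝔄 is connected with diameter at most 4. In the exceptional case n = p₁p₂, m = p₁^{α₁}p₂^{α₂} with α₁, α₂ ≥ 2, this induced subgraph is isomorphic to the disjoint union of complete graphs K_{α₁} and K_{α₂}. -/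
namespace IdealProofAux

lemma vne {m : ℕ} (hm : 1 < m) (I : IdealVertex m) : I.1 ≠ 0 := by
  intro h
  have h2 := I.2.1
  rw [h, zero_dvd_iff] at h2
  omega

lemma not_dvd_lcm_iff {n a b : ℕ} (hn : n ≠ 0) (ha : a ≠ 0) (hb : b ≠ 0) :
    ¬ n ∣ Nat.lcm a b ↔
      ∃ p, a.factorization p < n.factorization p ∧ b.factorization p < n.factorization p := by
  rw [← Nat.factorization_le_iff_dvd hn (Nat.lcm_ne_zero ha hb), Nat.factorization_lcm ha hb,
    Finsupp.le_def, not_forall]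
  refine exists_congr fun p => ?_
  rw [Finsupp.sup_apply, not_le, sup_lt_iff]

lemma adj_iff {n m : ℕ} (hn : 1 < n) (hm : 1 < m) {I J : IdealVertex m} :
    (idealGraph n m).Adj I J ↔ I ≠ J ∧ ∃ p, I.1.factorization p < n.factorization p ∧
      J.1.factorization p < n.factorization p := by
  change (I ≠ J ∧ ¬ n ∣ Nat.lcm I.1 J.1) ↔ _
  exact and_congr_right fun _ => not_dvd_lcm_iff (by omega) (vne hm I) (vne hm J)

lemma prime_of_lt_fact {n p k : ℕ} (h : k < n.factorization p) : p.Prime :=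
  Nat.prime_of_mem_primeFactors (by
    rw [← Nat.support_factorization]
    refine Finsupp.mem_support_iff.2 fun h0 => ?_
    rw [h0] at h
    omega)

lemma fact_pow_self {p : ℕ} (hp : p.Prime) (e : ℕ) : (p ^ e).factorization p = e := by
  rw [hp.factorization_pow]; simp

lemma fact_pow_other {q p : ℕ} (hq : q.Prime) (hne : q ≠ p) (e : ℕ) :
    (q ^ e).factorization p = 0 := by
  rw [hq.factorization_pow]; exact Finsupp.single_eq_of_ne' hne

lemma fact_mul_pow_left {p q : ℕ} (hp : p.Prime) (hq : q.Prime) (hpq : p ≠ q) (e f : ℕ) :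
    (p ^ e * q ^ f).factorization p = e := by
  rw [Nat.factorization_mul (pow_ne_zero _ hp.pos.ne') (pow_ne_zero _ hq.pos.ne')]
  rw [Finsupp.add_apply, fact_pow_self hp, fact_pow_other hq hpq.symm]
  omega

lemma fact_mul_primes {p q : ℕ} (hp : p.Prime) (hq : q.Prime) (hpq : p ≠ q) :
    (p * q).factorization p = 1 := by
  have := fact_mul_pow_left hp hq hpq 1 1
  simpa using this

lemma pq_pow_dvd {p q e f N : ℕ} (hp : p.Prime) (hq : q.Prime) (hpq : p ≠ q)
    (h1 : p ^ e ∣ N) (h2 : q ^ f ∣ N) : p ^ e * q ^ f ∣ N :=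
  (Nat.Coprime.pow e f ((Nat.coprime_primes hp hq).2 hpq)).mul_dvd_of_dvd_of_dvd h1 h2

lemma finish {n m : ℕ} (hn : 1 < n) (hm : 1 < m) (a b c : IdealVertex m) {p q : ℕ}
    (hap : a.1.factorization p < n.factorization p)
    (hcp : c.1.factorization p < n.factorization p)
    (hcq : c.1.factorization q < n.factorization q)
    (hbq : b.1.factorization q < n.factorization q)
    (hamem : ∃ u, (idealGraph n m).Adj a u) :
    ∃ c' : IdealVertex m, (∃ u, (idealGraph n m).Adj c' u) ∧
      (a = c' ∨ (idealGraph n m).Adj a c') ∧ (c' = b ∨ (idealGraph n m).Adj c' b) := by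
  have h1 : a = c ∨ (idealGraph n m).Adj a c := by
    by_cases h : a = c
    · exact Or.inl h
    · exact Or.inr ((adj_iff hn hm).2 ⟨h, p, hap, hcp⟩)
  have h2 : c = b ∨ (idealGraph n m).Adj c b := by
    by_cases h : c = b
    · exact Or.inl h
    · exact Or.inr ((adj_iff hn hm).2 ⟨h, q, hcq, hbq⟩)
  have hmem : ∃ u, (idealGraph n m).Adj c u := by
    rcases h1 with rfl | h
    · exact hamem
    · exact ⟨a, h.symm⟩
  exact ⟨c, hmem, h1, h2⟩

lemma key {n m : ℕ} (hn : 1 < n) (hm : 1 < m) (hdvd : n ∣ m)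
    (hne : ¬ ∃ p₁ p₂ α₁ α₂ : ℕ, p₁.Prime ∧ p₂.Prime ∧ p₁ ≠ p₂ ∧ 2 ≤ α₁ ∧ 2 ≤ α₂ ∧
        n = p₁ * p₂ ∧ m = p₁ ^ α₁ * p₂ ^ α₂)
    (a b : IdealVertex m)
    (ha : ∃ u, (idealGraph n m).Adj a u) (hb : ∃ u, (idealGraph n m).Adj b u) :
    ∃ c : IdealVertex m, (∃ u, (idealGraph n m).Adj c u) ∧
      (a = c ∨ (idealGraph n m).Adj a c) ∧ (c = b ∨ (idealGraph n m).Adj c b) := by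
  obtain ⟨u, hau⟩ := ha
  obtain ⟨w, hbw⟩ := hb
  obtain ⟨hau_ne, p, hap, hup⟩ := (adj_iff hn hm).1 hau
  obtain ⟨hbw_ne, q, hbq, hwq⟩ := (adj_iff hn hm).1 hbw
  have hp : p.Prime := prime_of_lt_fact hap
  have hq : q.Prime := prime_of_lt_fact hbq
  have hn0 : n ≠ 0 := by omega
  have hm0 : m ≠ 0 := by omega
  have hfmn : ∀ r, n.factorization r ≤ m.factorization r :=
    fun r => Finsupp.le_def.1 ((Nat.factorization_le_iff_dvd hn0 hm0).2 hdvd) r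
  by_cases hpq : p = q
  · subst hpq
    refine ⟨a, ⟨u, hau⟩, Or.inl rfl, ?_⟩
    by_cases hab : a = b
    · exact Or.inl hab
    · exact Or.inr ((adj_iff hn hm).2 ⟨hab, p, hap, hbq⟩)
  by_cases h2 : 2 ≤ n.factorization p ∨ 2 ≤ n.factorization q
  · -- construct c = p^(fp-1) * q^(fq-1)
    set e := n.factorization p - 1 with he
    set f := n.factorization q - 1 with hf
    have hdvdn : p ^ e * q ^ f ∣ n :=
      pq_pow_dvd hp hq hpq ((hp.pow_dvd_iff_le_factorization hn0).2 (by omega))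
        ((hq.pow_dvd_iff_le_factorization hn0).2 (by omega))
    have hfp : (p ^ e * q ^ f).factorization p = e := fact_mul_pow_left hp hq hpq e f
    have hfq : (p ^ e * q ^ f).factorization q = f := by
      rw [mul_comm]; exact fact_mul_pow_left hq hp (Ne.symm hpq) f e
    have hne1 : p ^ e * q ^ f ≠ 1 := by
      intro h
      rw [h] at hfp hfq
      simp [Nat.factorization_one] at hfp hfq
      omega
    have hnem : p ^ e * q ^ f ≠ m := by
      intro h
      rw [h] at hfp
      have := hfmn p
      omega
    exact finish hn hm a b ⟨p ^ e * q ^ f, hdvdn.trans hdvd, hne1, hnem⟩ hap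
      (by simp only [hfp]; omega) (by simp only [hfq]; omega) hbq ⟨u, hau⟩
  push_neg at h2
  by_cases h3 : ∃ r ∈ m.primeFactors, r ≠ p ∧ r ≠ q
  · obtain ⟨r, hrm, hrp, hrq⟩ := h3
    have hr : r.Prime := Nat.prime_of_mem_primeFactors hrm
    have hpm : p ∣ m := (Nat.dvd_of_factorization_pos (by omega)).trans hdvd
    have hrnem : r ≠ m := by
      rintro rfl
      exact hrp ((Nat.prime_dvd_prime_iff_eq hp hr).1 hpm).symm
    have hr0 : ∀ s, s ≠ r → r.factorization s = 0 := fun s hs => by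
      rw [hr.factorization]; exact Finsupp.single_eq_of_ne' (Ne.symm hs)
    exact finish hn hm a b ⟨r, Nat.dvd_of_mem_primeFactors hrm, hr.one_lt.ne', hrnem⟩ hap
      (by rw [hr0 p (Ne.symm hrp)]; omega) (by rw [hr0 q (Ne.symm hrq)]; omega) hbq ⟨u, hau⟩
  · push_neg at h3
    exfalso
    have hfactm : ∀ r, m.factorization r ≠ 0 → r = p ∨ r = q := by
      intro r hr
      have hrm : r ∈ m.primeFactors := by
        rw [← Nat.support_factorization]; exact Finsupp.mem_support_iff.2 hr
      by_cases h : r = p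
      · exact Or.inl h
      · exact Or.inr (h3 r hrm h)
    set α := m.factorization p with hαdef
    set β := m.factorization q with hβdef
    have hpn : p ∣ n := Nat.dvd_of_factorization_pos (by omega)
    have hqn : q ∣ n := Nat.dvd_of_factorization_pos (by omega)
    have hα1 : 1 ≤ α := by have := hfmn p; omega
    have hβ1 : 1 ≤ β := by have := hfmn q; omega
    have hpqm0 : p ^ α * q ^ β ≠ 0 :=
      Nat.mul_ne_zero (pow_ne_zero _ hp.pos.ne') (pow_ne_zero _ hq.pos.ne')
    have hmeq : m = p ^ α * q ^ β := by
      refine Nat.dvd_antisymm ?_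
        (pq_pow_dvd hp hq hpq ((hp.pow_dvd_iff_le_factorization hm0).2 le_rfl)
          ((hq.pow_dvd_iff_le_factorization hm0).2 le_rfl))
      rw [← Nat.factorization_le_iff_dvd hm0 hpqm0, Finsupp.le_def]
      intro r
      by_cases hr0 : m.factorization r = 0
      · rw [hr0]; exact Nat.zero_le _
      rcases hfactm r hr0 with rfl | rfl
      · rw [fact_mul_pow_left hp hq hpq]
      · rw [mul_comm, fact_mul_pow_left hq hp (Ne.symm hpq)]
    have hneq : n = p * q := by
      refine Nat.dvd_antisymm ?_
        (((Nat.coprime_primes hp hq).2 hpq).mul_dvd_of_dvd_of_dvd hpn hqn)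
      rw [← Nat.factorization_le_iff_dvd hn0 (Nat.mul_ne_zero hp.pos.ne' hq.pos.ne'), Finsupp.le_def]
      intro r
      by_cases hr0 : n.factorization r = 0
      · rw [hr0]; exact Nat.zero_le _
      have hrm : m.factorization r ≠ 0 := by have := hfmn r; omega
      rcases hfactm r hrm with rfl | rfl
      · rw [fact_mul_primes hp hq hpq]; omega
      · rw [mul_comm, fact_mul_primes hq hp (Ne.symm hpq)]; omega
    by_cases hα2 : 2 ≤ α
    · by_cases hβ2 : 2 ≤ β
      · exact hne ⟨p, q, α, β, hp, hq, hpq, hα2, hβ2, hneq, hmeq⟩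
      · -- β = 1 : both a and u are powers of q dividing q, hence both = q
        have hβval : β = 1 := by omega
        have dvd_q : ∀ v : IdealVertex m, v.1.factorization p < n.factorization p → v.1 = q := by
          intro v hv
          have hfp1 : n.factorization p ≤ 1 := by omega
          have hnd : ¬ p ∣ v.1 := fun h => by
            have : 1 ≤ v.1.factorization p :=
              (hp.pow_dvd_iff_le_factorization (vne hm v)).1 (by rwa [pow_one])
            omega
          have hvm : v.1 ∣ p ^ α * q ^ β := hmeq ▸ v.2.1
          have hcop : (v.1).Coprime (p ^ α) :=
            Nat.Coprime.pow_right _ (((hp.coprime_iff_not_dvd).2 hnd).symm)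
          have hvq : v.1 ∣ q ^ β := hcop.dvd_of_dvd_mul_left hvm
          rw [hβval, pow_one] at hvq
          exact ((Nat.dvd_prime hq).1 hvq).resolve_left v.2.2.1
        exact hau_ne (Subtype.ext ((dvd_q a hap).trans (dvd_q u hup).symm))
    · -- α = 1 : both b and w equal p
      have hαval : α = 1 := by omega
      have dvd_p : ∀ v : IdealVertex m, v.1.factorization q < n.factorization q → v.1 = p := by
        intro v hv
        have hfq1 : n.factorization q ≤ 1 := by omega
        have hnd : ¬ q ∣ v.1 := fun h => by
          have : 1 ≤ v.1.factorization q :=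
            (hq.pow_dvd_iff_le_factorization (vne hm v)).1 (by rwa [pow_one])
          omega
        have hvm : v.1 ∣ p ^ α * q ^ β := hmeq ▸ v.2.1
        have hcop : (v.1).Coprime (q ^ β) :=
          Nat.Coprime.pow_right _ (((hq.coprime_iff_not_dvd).2 hnd).symm)
        have hvp : v.1 ∣ p ^ α := hcop.dvd_of_dvd_mul_right hvm
        rw [hαval, pow_one] at hvp
        exact ((Nat.dvd_prime hp).1 hvp).resolve_left v.2.2.1
      exact hbw_ne (Subtype.ext ((dvd_p b hbq).trans (dvd_p w hwq).symm))

lemma reach_dist {V : Type*} {G : SimpleGraph V} {x y c : V}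
    (h1 : x = c ∨ G.Adj x c) (h2 : c = y ∨ G.Adj c y) :
    G.Reachable x y ∧ G.dist x y ≤ 4 := by
  rcases h1 with rfl | h1 <;> rcases h2 with rfl | h2
  · exact ⟨SimpleGraph.Reachable.refl _, by rw [SimpleGraph.dist_self]; omega⟩
  · refine ⟨h2.reachable, le_trans (SimpleGraph.dist_le (SimpleGraph.Walk.cons h2 .nil)) ?_⟩
    rw [SimpleGraph.Walk.length_cons, SimpleGraph.Walk.length_nil]
    omega
  · refine ⟨h1.reachable, le_trans (SimpleGraph.dist_le (SimpleGraph.Walk.cons h1 .nil)) ?_⟩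
    rw [SimpleGraph.Walk.length_cons, SimpleGraph.Walk.length_nil]
    omega
  · refine ⟨⟨SimpleGraph.Walk.cons h1 (SimpleGraph.Walk.cons h2 .nil)⟩,
      le_trans (SimpleGraph.dist_le (SimpleGraph.Walk.cons h1 (SimpleGraph.Walk.cons h2 .nil))) ?_⟩
    rw [SimpleGraph.Walk.length_cons, SimpleGraph.Walk.length_cons,
      SimpleGraph.Walk.length_nil]
    omega

end IdealProofAux

namespace IdealProofAux

/-- The vertex map for the exceptional case. -/
def Fdef {m : ℕ} (p q α β : ℕ)
    (hvp : ∀ i : ℕ, 1 ≤ i → i ≤ α → (p ^ i ∣ m ∧ p ^ i ≠ 1 ∧ p ^ i ≠ m))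
    (hvq : ∀ j : ℕ, 1 ≤ j → j ≤ β → (q ^ j ∣ m ∧ q ^ j ≠ 1 ∧ q ^ j ≠ m)) :
    Fin α ⊕ Fin β → IdealVertex m := fun x =>
  match x with
  | .inl i => ⟨p ^ (i.1 + 1), hvp _ (Nat.le_add_left 1 _) i.2⟩
  | .inr j => ⟨q ^ (j.1 + 1), hvq _ (Nat.le_add_left 1 _) j.2⟩

lemma part2 {n m : ℕ} (hn : 1 < n) (hm : 1 < m) (p q α β : ℕ)
    (hp : p.Prime) (hq : q.Prime) (hpq : p ≠ q) (hα : 2 ≤ α) (hβ : 2 ≤ β)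
    (hneq : n = p * q) (hmeq : m = p ^ α * q ^ β) :
    Nonempty ((SimpleGraph.completeGraph (Fin α) ⊕g SimpleGraph.completeGraph (Fin β)) ≃g
      ((idealGraph n m).induce
        {v : IdealVertex m | ∃ u : IdealVertex m, (idealGraph n m).Adj v u})) := by
  have hm0 : m ≠ 0 := by omega
  have fnp : n.factorization p = 1 := by rw [hneq]; exact fact_mul_primes hp hq hpq
  have fnq : n.factorization q = 1 := by
    rw [hneq, mul_comm]; exact fact_mul_primes hq hp (Ne.symm hpq)
  have hvp : ∀ i : ℕ, 1 ≤ i → i ≤ α → (p ^ i ∣ m ∧ p ^ i ≠ 1 ∧ p ^ i ≠ m) := by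
    intro i h1 h2
    refine ⟨hmeq ▸ (pow_dvd_pow p h2).trans (dvd_mul_right _ _), ?_, ?_⟩
    · intro h
      have h' := Nat.le_of_dvd one_pos (h ▸ dvd_pow_self p (by omega : i ≠ 0))
      have := hp.two_le
      omega
    · intro h
      have hq1 : q ∣ m := hmeq ▸ (dvd_pow_self q (by omega : β ≠ 0)).mul_left _
      rw [← h] at hq1
      exact hpq ((Nat.prime_dvd_prime_iff_eq hq hp).1 (hq.dvd_of_dvd_pow hq1)).symm
  have hvq : ∀ j : ℕ, 1 ≤ j → j ≤ β → (q ^ j ∣ m ∧ q ^ j ≠ 1 ∧ q ^ j ≠ m) := by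
    intro j h1 h2
    refine ⟨hmeq ▸ ((pow_dvd_pow q h2).trans (dvd_mul_left _ _)), ?_, ?_⟩
    · intro h
      have h' := Nat.le_of_dvd one_pos (h ▸ dvd_pow_self q (by omega : j ≠ 0))
      have := hq.two_le
      omega
    · intro h
      have hp1 : p ∣ m := hmeq ▸ (dvd_pow_self p (by omega : α ≠ 0)).mul_right _
      rw [← h] at hp1
      exact hpq ((Nat.prime_dvd_prime_iff_eq hp hq).1 (hp.dvd_of_dvd_pow hp1))
  set F := Fdef p q α β hvp hvq with hF
  have hadj : ∀ x y, (idealGraph n m).Adj (F x) (F y) ↔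
      (SimpleGraph.completeGraph (Fin α) ⊕g SimpleGraph.completeGraph (Fin β)).Adj x y := by
    rintro (i | i) (j | j)
    · show (idealGraph n m).Adj ⟨p ^ (i.1 + 1), _⟩ ⟨p ^ (j.1 + 1), _⟩ ↔ i ≠ j
      rw [adj_iff hn hm]
      constructor
      · rintro ⟨hne', -⟩ hij
        exact hne' (by rw [hij])
      · intro hij
        refine ⟨?_, q, ?_, ?_⟩
        · intro h
          have h' : p ^ (i.1 + 1) = p ^ (j.1 + 1) := congrArg Subtype.val h
          have := Nat.pow_right_injective hp.two_le h'
          exact hij (Fin.ext (by omega))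
        · show (p ^ (i.1 + 1)).factorization q < _
          rw [fact_pow_other hp hpq, fnq]; omega
        · show (p ^ (j.1 + 1)).factorization q < _
          rw [fact_pow_other hp hpq, fnq]; omega
    · refine iff_of_false ?_ (by simp)
      intro hA
      obtain ⟨-, s, h1, h2⟩ := (adj_iff hn hm).1 hA
      have h1' : (p ^ (i.1 + 1)).factorization s < n.factorization s := h1
      have h2' : (q ^ (j.1 + 1)).factorization s < n.factorization s := h2
      have hs : s.Prime := prime_of_lt_fact h1'
      have hsn : s ∣ p * q := hneq ▸ Nat.dvd_of_factorization_pos (by omega)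
      rcases (hs.dvd_mul).1 hsn with hsp | hsq
      · have : s = p := (Nat.prime_dvd_prime_iff_eq hs hp).1 hsp
        subst this
        rw [fact_pow_self hp, fnp] at h1'
        omega
      · have : s = q := (Nat.prime_dvd_prime_iff_eq hs hq).1 hsq
        subst this
        rw [fact_pow_self hq, fnq] at h2'
        omega
    · refine iff_of_false ?_ (by simp)
      intro hA
      obtain ⟨-, s, h1, h2⟩ := (adj_iff hn hm).1 hA
      have h1' : (q ^ (i.1 + 1)).factorization s < n.factorization s := h1
      have h2' : (p ^ (j.1 + 1)).factorization s < n.factorization s := h2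
      have hs : s.Prime := prime_of_lt_fact h1'
      have hsn : s ∣ p * q := hneq ▸ Nat.dvd_of_factorization_pos (by omega)
      rcases (hs.dvd_mul).1 hsn with hsp | hsq
      · have : s = p := (Nat.prime_dvd_prime_iff_eq hs hp).1 hsp
        subst this
        rw [fact_pow_self hp, fnp] at h2'
        omega
      · have : s = q := (Nat.prime_dvd_prime_iff_eq hs hq).1 hsq
        subst this
        rw [fact_pow_self hq, fnq] at h1'
        omega
    · show (idealGraph n m).Adj ⟨q ^ (i.1 + 1), _⟩ ⟨q ^ (j.1 + 1), _⟩ ↔ i ≠ j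
      rw [adj_iff hn hm]
      constructor
      · rintro ⟨hne', -⟩ hij
        exact hne' (by rw [hij])
      · intro hij
        refine ⟨?_, p, ?_, ?_⟩
        · intro h
          have h' : q ^ (i.1 + 1) = q ^ (j.1 + 1) := congrArg Subtype.val h
          have := Nat.pow_right_injective hq.two_le h'
          exact hij (Fin.ext (by omega))
        · show (q ^ (i.1 + 1)).factorization p < _
          rw [fact_pow_other hq (Ne.symm hpq), fnp]; omega
        · show (q ^ (j.1 + 1)).factorization p < _
          rw [fact_pow_other hq (Ne.symm hpq), fnp]; omega
  have hmem : ∀ x, F x ∈ {v : IdealVertex m | ∃ u : IdealVertex m, (idealGraph n m).Adj v u} := by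
    rintro (i | i)
    · refine ⟨F (Sum.inl (if i.1 = 0 then ⟨1, by omega⟩ else ⟨0, by omega⟩)), (hadj _ _).2 ?_⟩
      show i ≠ _
      split <;> rename_i h <;> simp [Fin.ext_iff] <;> omega
    · refine ⟨F (Sum.inr (if i.1 = 0 then ⟨1, by omega⟩ else ⟨0, by omega⟩)), (hadj _ _).2 ?_⟩
      show i ≠ _
      split <;> rename_i h <;> simp [Fin.ext_iff] <;> omega
  let f : Fin α ⊕ Fin β → {v : IdealVertex m | ∃ u : IdealVertex m, (idealGraph n m).Adj v u} :=
    fun x => ⟨F x, hmem x⟩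
  have hinj : Function.Injective f := by
    rintro (i | i) (j | j) h
    · have hv : p ^ (i.1 + 1) = p ^ (j.1 + 1) := congrArg (fun z => z.1.1) h
      have := Nat.pow_right_injective hp.two_le hv
      exact congrArg Sum.inl (Fin.ext (by omega))
    · exfalso
      have hv : p ^ (i.1 + 1) = q ^ (j.1 + 1) := congrArg (fun z => z.1.1) h
      have : p ∣ q ^ (j.1 + 1) := hv ▸ dvd_pow_self p (by omega)
      exact hpq ((Nat.prime_dvd_prime_iff_eq hp hq).1 (hp.dvd_of_dvd_pow this))
    · exfalso
      have hv : q ^ (i.1 + 1) = p ^ (j.1 + 1) := congrArg (fun z => z.1.1) h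
      have : q ∣ p ^ (j.1 + 1) := hv ▸ dvd_pow_self q (by omega)
      exact hpq ((Nat.prime_dvd_prime_iff_eq hq hp).1 (hq.dvd_of_dvd_pow this)).symm
    · have hv : q ^ (i.1 + 1) = q ^ (j.1 + 1) := congrArg (fun z => z.1.1) h
      have := Nat.pow_right_injective hq.two_le hv
      exact congrArg Sum.inr (Fin.ext (by omega))
  have hsurj : Function.Surjective f := by
    rintro ⟨d, hd⟩
    obtain ⟨u, hdu⟩ := hd
    obtain ⟨hne', s, h1, h2⟩ := (adj_iff hn hm).1 hdu
    have hs : s.Prime := prime_of_lt_fact h1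
    have hsn : s ∣ p * q := hneq ▸ Nat.dvd_of_factorization_pos (by omega)
    have hdm : d.1 ∣ p ^ α * q ^ β := hmeq ▸ d.2.1
    rcases (hs.dvd_mul).1 hsn with hsp | hsq
    · -- s = p : d is a power of q
      have hsp' : s = p := (Nat.prime_dvd_prime_iff_eq hs hp).1 hsp
      subst hsp'
      rw [fnp] at h1
      have hnd : ¬ s ∣ d.1 := fun hdvd => by
        have : 1 ≤ d.1.factorization s :=
          (hp.pow_dvd_iff_le_factorization (vne hm d)).1 (by rwa [pow_one])
        omega
      have hcop : (d.1).Coprime (s ^ α) :=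
        Nat.Coprime.pow_right _ (((hp.coprime_iff_not_dvd).2 hnd).symm)
      have hdq : d.1 ∣ q ^ β := hcop.dvd_of_dvd_mul_left hdm
      obtain ⟨k, hk, hdk⟩ := (Nat.dvd_prime_pow hq).1 hdq
      have hk0 : k ≠ 0 := by
        rintro rfl
        exact d.2.2.1 (by simpa using hdk)
      refine ⟨Sum.inr ⟨k - 1, by omega⟩, ?_⟩
      apply Subtype.ext
      apply Subtype.ext
      show q ^ (k - 1 + 1) = d.1
      rw [hdk]
      congr 1
      omega
    · -- s = q : d is a power of p
      have hsq' : s = q := (Nat.prime_dvd_prime_iff_eq hs hq).1 hsq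
      subst hsq'
      rw [fnq] at h1
      have hnd : ¬ s ∣ d.1 := fun hdvd => by
        have : 1 ≤ d.1.factorization s :=
          (hq.pow_dvd_iff_le_factorization (vne hm d)).1 (by rwa [pow_one])
        omega
      have hcop : (d.1).Coprime (s ^ β) :=
        Nat.Coprime.pow_right _ (((hq.coprime_iff_not_dvd).2 hnd).symm)
      have hdp : d.1 ∣ p ^ α := hcop.dvd_of_dvd_mul_right hdm
      obtain ⟨k, hk, hdk⟩ := (Nat.dvd_prime_pow hp).1 hdp
      have hk0 : k ≠ 0 := by
        rintro rfl
        exact d.2.2.1 (by simpa using hdk)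
      refine ⟨Sum.inl ⟨k - 1, by omega⟩, ?_⟩
      apply Subtype.ext
      apply Subtype.ext
      show p ^ (k - 1 + 1) = d.1
      rw [hdk]
      congr 1
      omega
  exact ⟨⟨Equiv.ofBijective f ⟨hinj, hsurj⟩, fun {x y} => hadj x y⟩⟩

end IdealProofAux


open IdealProofAux

/-- The induced subgraph of `G_n(Z_m)` on the non-isolated vertices: outside the
exceptional case it is connected with diameter at most 4; in the exceptional case
`n = p₁p₂`, `m = p₁^{α₁}p₂^{α₂}` with `α₁, α₂ ≥ 2`, it is isomorphic to `K_{α₁} ∪ K_{α₂}`. -/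
theorem idealGraph_induced_diameter (n m : ℕ) (hn : 1 < n) (hm : 1 < m) (hdvd : n ∣ m)
    (hnotnull : ∃ a b : IdealVertex m, (idealGraph n m).Adj a b) :
    ((¬ ∃ p₁ p₂ α₁ α₂ : ℕ, p₁.Prime ∧ p₂.Prime ∧ p₁ ≠ p₂ ∧ 2 ≤ α₁ ∧ 2 ≤ α₂ ∧
        n = p₁ * p₂ ∧ m = p₁ ^ α₁ * p₂ ^ α₂) →
      ((idealGraph n m).induce
          {v : IdealVertex m | ∃ u : IdealVertex m, (idealGraph n m).Adj v u}).Connected ∧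
        ∀ a b : {v : IdealVertex m | ∃ u : IdealVertex m, (idealGraph n m).Adj v u},
          ((idealGraph n m).induce
            {v : IdealVertex m | ∃ u : IdealVertex m, (idealGraph n m).Adj v u}).dist a b ≤ 4) ∧
    (∀ p₁ p₂ α₁ α₂ : ℕ, p₁.Prime → p₂.Prime → p₁ ≠ p₂ → 2 ≤ α₁ → 2 ≤ α₂ →
      n = p₁ * p₂ → m = p₁ ^ α₁ * p₂ ^ α₂ →
      Nonempty (((idealGraph n m).induce
          {v : IdealVertex m | ∃ u : IdealVertex m, (idealGraph n m).Adj v u}) ≃g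
        (SimpleGraph.completeGraph (Fin α₁) ⊕g SimpleGraph.completeGraph (Fin α₂)))) := by
  constructor
  · intro hne
    have H : ∀ x y : {v : IdealVertex m | ∃ u : IdealVertex m, (idealGraph n m).Adj v u},
        ((idealGraph n m).induce
          {v : IdealVertex m | ∃ u : IdealVertex m, (idealGraph n m).Adj v u}).Reachable x y ∧
        ((idealGraph n m).induce
          {v : IdealVertex m | ∃ u : IdealVertex m, (idealGraph n m).Adj v u}).dist x y ≤ 4 := by
      intro x y
      obtain ⟨c, hcmem, h1, h2⟩ := key hn hm hdvd hne x.1 y.1 x.2 y.2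
      exact reach_dist (c := ⟨c, hcmem⟩)
        (h1.imp (fun h => Subtype.ext h) (fun h => h))
        (h2.imp (fun h => Subtype.ext h.symm |>.symm) (fun h => h))
    obtain ⟨a, b, hab⟩ := hnotnull
    have : Nonempty {v : IdealVertex m | ∃ u : IdealVertex m, (idealGraph n m).Adj v u} :=
      ⟨⟨a, ⟨b, hab⟩⟩⟩
    exact ⟨⟨fun x y => (H x y).1⟩, fun x y => (H x y).2⟩
  · intro p₁ p₂ α₁ α₂ hp hq hpq hα hβ hneq hmeq
    exact ⟨(part2 hn hm p₁ p₂ α₁ α₂ hp hq hpq hα hβ hneq hmeq).some.symm⟩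
end
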